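/- Let P and Q be monotone-constraint programs with the same SE-models. Then P and Q have the same stable models. -/

import Mathlib

universe u

/-- A constraint `A = (X, C)`: domain `X` and a family `C` of subsets of `X`. -/
structure Constraint (α : Type u) where
  dom : Set α
  sat : Set (Set α)
  sat_sub : ∀ Y ∈ sat, Y ⊆ dom

/-- `M ⊨ A` iff `M ∩ Dom(A) ∈ C`. -/
def Constraint.Sat {α : Type u} (M : Set α) (A : Constraint α) : Prop :=
  M ∩ A.dom ∈ A.sat

/-- A constraint is monotone if its satisfying family is closed under supersets
within the domain. -/
def Constraint.Mono {α : Type u} (A : Constraint α) : Prop :=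
  ∀ W Y : Set α, W ∈ A.sat → W ⊆ Y → Y ⊆ A.dom → Y ∈ A.sat

/-- A rule `A ← A₁,…,A_k, not(A_{k+1}),…,not(A_m)`. -/
structure Rule (α : Type u) where
  head : Constraint α
  pos : Set (Constraint α)
  neg : Set (Constraint α)

/-- A constraint program is a set of rules. -/
abbrev Program (α : Type u) := Set (Rule α)

def Rule.Horn {α : Type u} (r : Rule α) : Prop := r.neg = ∅

def Rule.Mono {α : Type u} (r : Rule α) : Prop :=
  r.head.Mono ∧ (∀ A ∈ r.pos, A.Mono) ∧ (∀ A ∈ r.neg, A.Mono)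

def Program.Horn {α : Type u} (P : Program α) : Prop := ∀ r ∈ P, r.Horn

def Program.Mono {α : Type u} (P : Program α) : Prop := ∀ r ∈ P, r.Mono

/-- `M` satisfies the body of `r`. -/
def Rule.BodySat {α : Type u} (M : Set α) (r : Rule α) : Prop :=
  (∀ A ∈ r.pos, Constraint.Sat M A) ∧ (∀ A ∈ r.neg, ¬ Constraint.Sat M A)

/-- `P(M)`: the set of `M`-applicable rules of `P`. -/
def Program.app {α : Type u} (P : Program α) (M : Set α) : Program α :=
  {r ∈ P | r.BodySat M}

/-- `hset(r) = Dom(hd(r))`. -/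
def Rule.hset {α : Type u} (r : Rule α) : Set α := r.head.dom

/-- `hset(P)`: union of the headsets of rules of `P`. -/
def Program.hset {α : Type u} (P : Program α) : Set α := ⋃ r ∈ P, r.hset

def Rule.atoms {α : Type u} (r : Rule α) : Set α :=
  r.head.dom ∪ (⋃ A ∈ r.pos, A.dom) ∪ (⋃ A ∈ r.neg, A.dom)

/-- `At(P)`: atoms occurring in domains of constraints of `P`. -/
def Program.atoms {α : Type u} (P : Program α) : Set α := ⋃ r ∈ P, r.atoms

/-- `M` is a model of `P`. -/
def Program.IsModel {α : Type u} (P : Program α) (M : Set α) : Prop :=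
  ∀ r ∈ P, r.BodySat M → Constraint.Sat M r.head

/-- `M` is a supported model of `P`. -/
def Program.Supported {α : Type u} (P : Program α) (M : Set α) : Prop :=
  P.IsModel M ∧ M ⊆ (P.app M).hset

/-- The nondeterministic one-step provability operator `T_P^nd`. -/
def Program.Tnd {α : Type u} (P : Program α) (M : Set α) : Set (Set α) :=
  {M' | M' ⊆ (P.app M).hset ∧ ∀ r ∈ P.app M, Constraint.Sat M' r.head}

/-- A `P`-computation: a transfinite sequence starting at `∅`, increasing, with
each successor step nondeterministically one-step provable, continuous at limits. -/
structure PComputation {α : Type u} (P : Program α) where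
  X : Ordinal.{u} → Set α
  zero : X 0 = ∅
  incr : ∀ o, X o ⊆ X (o + 1)
  step : ∀ o, X (o + 1) ∈ P.Tnd (X o)
  limit : ∀ o : Ordinal.{u}, Order.IsSuccLimit o → X o = ⋃ β < o, X β

/-- The result `R_t` of a computation. -/
def PComputation.result {α : Type u} {P : Program α} (t : PComputation P) : Set α :=
  ⋃ o, t.X o

/-- `M` is a derivable model of `P`: the result of some `P`-computation. -/
def Program.Derivable {α : Type u} (P : Program α) (M : Set α) : Prop :=
  ∃ t : PComputation P, t.result = M

/-- The canonical sequence `t^{P,M}`: `X₀ = ∅`, `X_{β+1} = hset(P(X_β)) ∩ M`,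
unions at limits. -/
noncomputable def canSeq {α : Type u} (P : Program α) (M : Set α) (o : Ordinal.{u}) :
    Set α :=
  Ordinal.limitRecOn o ∅ (fun _ ih => (P.app ih).hset ∩ M)
    (fun o _ ih => ⋃ β : Ordinal.{u}, ⋃ h : β < o, ih β h)

/-- `Can(P,M)`: the result of the canonical computation. -/
noncomputable def Can {α : Type u} (P : Program α) (M : Set α) : Set α :=
  ⋃ o, canSeq P M o

/-- The reduct of a single rule: drop negated literals. -/
def Rule.pos_part {α : Type u} (r : Rule α) : Rule α := ⟨r.head, r.pos, ∅⟩

/-- The reduct `P^M`. -/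
def Program.reduct {α : Type u} (P : Program α) (M : Set α) : Program α :=
  {r' | ∃ r ∈ P, (∀ A ∈ r.neg, ¬ Constraint.Sat M A) ∧ r' = r.pos_part}

/-- `M` is a stable model of `P`: a derivable model of the reduct `P^M`. -/
def Program.Stable {α : Type u} (P : Program α) (M : Set α) : Prop :=
  (P.reduct M).Derivable M

/-- `N ⊨_M P`: `N` is an `M`-maximal model of the Horn program `P`. -/
def Program.MMax {α : Type u} (P : Program α) (M N : Set α) : Prop :=
  N ⊆ M ∧ P.IsModel N ∧ M ∩ (P.app N).hset ⊆ N

/-- `(X,Y)` is an SE-model of `P`. -/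
def Program.SE {α : Type u} (P : Program α) (X Y : Set α) : Prop :=
  X ⊆ Y ∧ P.IsModel Y ∧ (P.reduct Y).MMax Y X

/-- `(X,Y)` is a UE-model of `P`. -/
def Program.UE {α : Type u} (P : Program α) (X Y : Set α) : Prop :=
  P.SE X Y ∧ ∀ X', P.SE X' Y → X ⊆ X' → X = X' ∨ X' = Y

/-- Strong equivalence of monotone-constraint programs. -/
def StrongEq {α : Type u} (P Q : Program α) : Prop :=
  ∀ R : Program α, R.Mono → ∀ M : Set α, (P ∪ R).Stable M ↔ (Q ∪ R).Stable M

/-- The rule `(D,{D}) ←`. -/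
def factRule {α : Type u} (D : Set α) : Rule α :=
  ⟨⟨D, {D}, fun Y hY => by simp only [Set.mem_singleton_iff] at hY; simp [hY]⟩, ∅, ∅⟩

/-- Uniform equivalence of monotone-constraint programs. -/
def UnifEq {α : Type u} (P Q : Program α) : Prop :=
  ∀ D : Set α, ∀ M : Set α,
    (P ∪ {factRule D}).Stable M ↔ (Q ∪ {factRule D}).Stable M

/-- `P` is tight on `M`. -/
def Program.Tight {α : Type u} (P : Program α) (M : Set α) : Prop :=
  ∃ lam : α → Ordinal.{u}, ∀ r ∈ P.app M, ∀ x ∈ M ∩ r.hset,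
    ∀ a ∈ M ∩ (⋃ A ∈ r.pos, A.dom), lam a < lam x

/-!
For a monotone program `P` the reduct `P^M` is Horn with a monotone applicability operator
`N ↦ P^M(N)`. Hence every `P^M`-computation with result `M` stays inside each `X` for which
`(X, M)` is an SE-model, and conversely, when `M` is a model of `P`, the canonical computation
`Can(P^M, M)` yields such an `X`. So `M` is stable exactly when `(M, M)` is an SE-model and
no `(X, M)` with `X ≠ M` is one: stability is determined by the SE-models alone.
-/

open Set

variable {α : Type u}

theorem Program.hset_mono : Monotone (Program.hset : Program α → Set α) :=
  fun _ _ h => biUnion_subset_biUnion_left h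

theorem Program.monotone_app_reduct {P : Program α} (hP : P.Mono) (M : Set α) :
    Monotone (P.reduct M).app := by
  rintro N₁ N₂ hN r ⟨⟨r₀, hr₀, hneg, rfl⟩, hpos, -⟩
  refine ⟨⟨r₀, hr₀, hneg, rfl⟩, fun A hA => ?_, fun A hA => hA.elim⟩
  exact (hP r₀ hr₀).2.1 A hA _ _ (hpos A hA) (inter_subset_inter_left _ hN) inter_subset_right

theorem Program.isModel_reduct_iff {P : Program α} {M : Set α} :
    (P.reduct M).IsModel M ↔ P.IsModel M := by
  constructor
  · intro h r hr hb
    exact h r.pos_part ⟨r, hr, hb.2, rfl⟩ ⟨hb.1, fun A hA => hA.elim⟩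
  · rintro h _ ⟨r, hr, hneg, rfl⟩ hb
    exact h r hr ⟨hb.1, hneg⟩

theorem Constraint.Sat.of_subset_of_inter_dom_subset {A : Constraint α} {M N : Set α}
    (hM : Constraint.Sat M A) (hNM : N ⊆ M) (hMN : M ∩ A.dom ⊆ N) : Constraint.Sat N A := by
  have h : N ∩ A.dom = M ∩ A.dom :=
    (inter_subset_inter_left _ hNM).antisymm fun a ha => ⟨hMN ha, ha.2⟩
  rwa [Constraint.Sat, h]

theorem Program.sat_head_of_mem_app {R : Program α} (hR : Monotone R.app) {M N N' : Set α}
    (hM : R.IsModel M) (hN : N ⊆ M) (hN' : N' ⊆ M) (hclosed : M ∩ (R.app N).hset ⊆ N')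
    {r : Rule α} (hr : r ∈ R.app N) : Constraint.Sat N' r.head := by
  obtain ⟨hrR, hb⟩ := hR hN hr
  exact (hM r hrR hb).of_subset_of_inter_dom_subset hN' fun a ha =>
    hclosed ⟨ha.1, mem_biUnion hr ha.2⟩

namespace Ordinal

theorem monotone_of_add_one_of_limit {γ : Type*} [CompleteLattice γ] {f : Ordinal.{u} → γ}
    (hsucc : ∀ o, f o ≤ f (o + 1)) (hlim : ∀ o, Order.IsSuccLimit o → f o = ⨆ i < o, f i) :
    Monotone f := by
  suffices h : ∀ o, ∀ i < o, f i ≤ f o from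
    fun i o hle => hle.lt_or_eq.elim (h o i) (fun h => h ▸ le_rfl)
  intro o
  induction o using Ordinal.limitRecOn with
  | zero => simp
  | add_one o ih =>
    intro i hi
    rcases (Order.lt_add_one_iff.mp hi).lt_or_eq with hlt | rfl
    · exact (ih i hlt).trans (hsucc o)
    · exact hsucc i
  | limit o hl _ =>
    intro i hi
    rw [hlim o hl]
    exact le_biSup f hi

theorem exists_forall_ge_eq_iUnion {f : Ordinal.{u} → Set α} (hf : Monotone f) :
    ∃ O, ∀ o, O ≤ o → f o = ⋃ i, f i := by
  have hstage : ∀ a : ⋃ o, f o, ∃ o, (a : α) ∈ f o := fun a => mem_iUnion.mp a.2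
  choose g hg using hstage
  obtain ⟨O, hO⟩ := Ordinal.bddAbove_of_small (s := range g)
  refine ⟨O, fun o hOo => (subset_iUnion f o).antisymm fun a ha => ?_⟩
  exact hf ((hO (mem_range_self ⟨a, ha⟩)).trans hOo) (hg ⟨a, ha⟩)

end Ordinal

namespace PComputation

variable {R : Program α} (t : PComputation R)

theorem monotone : Monotone t.X :=
  Ordinal.monotone_of_add_one_of_limit t.incr t.limit

theorem result_mem_tnd : t.result ∈ R.Tnd t.result := by
  obtain ⟨O, hO⟩ := Ordinal.exists_forall_ge_eq_iUnion t.monotone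
  have h := t.step O
  rwa [hO O le_rfl, hO (O + 1) (Order.le_succ O)] at h

theorem result_subset {X : Set α} (hR : Monotone R.app)
    (hX : t.result ∩ (R.app X).hset ⊆ X) : t.result ⊆ X := by
  suffices h : ∀ o, t.X o ⊆ X from iUnion_subset h
  intro o
  induction o using Ordinal.limitRecOn with
  | zero => simp [t.zero]
  | add_one o ih =>
    exact fun a ha => hX ⟨subset_iUnion t.X _ ha, Program.hset_mono (hR ih) ((t.step o).1 ha)⟩
  | limit o hl ih =>
    rw [t.limit o hl]
    exact iUnion₂_subset ih

end PComputation

section canSeq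

variable (R : Program α) (M : Set α)

@[simp]
theorem canSeq_zero : canSeq R M 0 = ∅ := by
  simp [canSeq]

theorem canSeq_add_one (o : Ordinal.{u}) :
    canSeq R M (o + 1) = (R.app (canSeq R M o)).hset ∩ M := by
  rw [canSeq, Ordinal.limitRecOn_add_one]
  rfl

theorem canSeq_limit {o : Ordinal.{u}} (ho : Order.IsSuccLimit o) :
    canSeq R M o = ⋃ β < o, canSeq R M β := by
  rw [canSeq, Ordinal.limitRecOn_limit _ _ _ _ ho]
  rfl

theorem canSeq_subset (o : Ordinal.{u}) : canSeq R M o ⊆ M := by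
  induction o using Ordinal.limitRecOn with
  | zero => simp
  | add_one o _ => simp only [canSeq_add_one, inter_subset_right]
  | limit o hl ih =>
    rw [canSeq_limit R M hl]
    exact iUnion₂_subset ih

variable {R}

theorem canSeq_subset_add_one (hR : Monotone R.app) (o : Ordinal.{u}) :
    canSeq R M o ⊆ canSeq R M (o + 1) := by
  induction o using Ordinal.limitRecOn with
  | zero => simp
  | add_one o ih =>
    have h := inter_subset_inter_left M (Program.hset_mono (hR ih))
    rwa [← canSeq_add_one, ← canSeq_add_one] at h
  | limit o hl ih =>
    have hle : ∀ β < o, canSeq R M β ⊆ canSeq R M o := fun β hβ => by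
      rw [canSeq_limit R M hl]
      exact subset_biUnion_of_mem hβ
    conv_lhs => rw [canSeq_limit R M hl]
    refine iUnion₂_subset fun β hβ => (ih β hβ).trans ?_
    rw [canSeq_add_one, canSeq_add_one]
    exact inter_subset_inter_left M (Program.hset_mono (hR (hle β hβ)))

theorem monotone_canSeq (hR : Monotone R.app) : Monotone (canSeq R M) :=
  Ordinal.monotone_of_add_one_of_limit (canSeq_subset_add_one M hR) (fun _ => canSeq_limit R M)

noncomputable def canComputation (hR : Monotone R.app) (hM : R.IsModel M) : PComputation R where
  X := canSeq R M
  zero := canSeq_zero R M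
  incr := canSeq_subset_add_one M hR
  step o := by
    have hclosed : M ∩ (R.app (canSeq R M o)).hset ⊆ canSeq R M (o + 1) := by
      rw [canSeq_add_one, inter_comm]
    refine ⟨canSeq_add_one R M o ▸ inter_subset_left, fun r hr => ?_⟩
    exact R.sat_head_of_mem_app hR hM (canSeq_subset R M o) (canSeq_subset R M _) hclosed hr
  limit _ ho := canSeq_limit R M ho

theorem can_eq_hset_inter (hR : Monotone R.app) : Can R M = (R.app (Can R M)).hset ∩ M := by
  obtain ⟨O, hO⟩ := Ordinal.exists_forall_ge_eq_iUnion (monotone_canSeq M hR)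
  have h := canSeq_add_one R M O
  rw [hO O le_rfl, hO (O + 1) (Order.le_succ O)] at h
  exact h

theorem mmax_can (hR : Monotone R.app) (hM : R.IsModel M) : R.MMax M (Can R M) := by
  have hCM : Can R M ⊆ M := iUnion_subset (canSeq_subset R M)
  have hclosed : M ∩ (R.app (Can R M)).hset ⊆ Can R M := by
    intro a ha
    rw [can_eq_hset_inter M hR]
    exact ⟨ha.2, ha.1⟩
  exact ⟨hCM, fun r hr hb => R.sat_head_of_mem_app hR hM hCM hCM hclosed ⟨hr, hb⟩, hclosed⟩

end canSeq

namespace Program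

variable {P : Program α} {M : Set α}

theorem Stable.se_self (h : P.Stable M) : P.SE M M := by
  obtain ⟨t, ht⟩ := h
  have hR : (P.reduct M).IsModel M := fun r hr hb => (ht ▸ t.result_mem_tnd).2 r ⟨hr, hb⟩
  exact ⟨subset_rfl, isModel_reduct_iff.mp hR, subset_rfl, hR, inter_subset_left⟩

theorem Stable.eq_of_se (hP : P.Mono) (h : P.Stable M) {X : Set α} (hX : P.SE X M) : X = M := by
  obtain ⟨t, ht⟩ := h
  have hMX := t.result_subset (X := X) (monotone_app_reduct hP M)
  rw [ht] at hMX
  exact hX.1.antisymm (hMX hX.2.2.2.2)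

theorem stable_of_se (hP : P.Mono) (hM : P.SE M M) (hmin : ∀ X, P.SE X M → X = M) :
    P.Stable M := by
  have hR := monotone_app_reduct hP M
  have hRM : (P.reduct M).IsModel M := isModel_reduct_iff.mpr hM.2.1
  exact ⟨canComputation M hR hRM, hmin _ ⟨(mmax_can M hR hRM).1, hM.2.1, mmax_can M hR hRM⟩⟩

theorem stable_iff_se (hP : P.Mono) : P.Stable M ↔ P.SE M M ∧ ∀ X, P.SE X M → X = M :=
  ⟨fun h => ⟨h.se_self, fun _ => h.eq_of_se hP⟩, fun h => stable_of_se hP h.1 h.2⟩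

end Program

/-- Programs with the same SE-models have the same stable models. -/
theorem se_eq_imp_stable_eq {α : Type u} (P Q : Program α) (hP : P.Mono) (hQ : Q.Mono)
    (hSE : ∀ X Y : Set α, P.SE X Y ↔ Q.SE X Y) :
    ∀ M : Set α, P.Stable M ↔ Q.Stable M := by
  intro M
  rw [Program.stable_iff_se hP, Program.stable_iff_se hQ]
  exact and_congr (hSE M M) (forall_congr' fun X => imp_congr_left (hSE X M))
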